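/- Let k(1/n(1,a)) := -2 + (2 + a + a')/n + Σ_{i=1}^{l}(b_i - 2), where n/a = [b_1,...,b_l] is the Hirzebruch–Jung continued fraction and a' is the inverse of a mod n with 1 ≤ a' ≤ n-1. Then k(1/n(1,a)) ≥ 0. -/

import Mathlib

/-!
Multiplying out `∏ᵢ !![bᵢ, -1; 1, 0]` gives a unimodular integer matrix with first column
`(n, a)` and top-right entry `-p`, where `p a ≡ 1 (mod n)` and `p < n`. For
`κ(b) = n (Σᵢ (bᵢ - 2) - 2) + a + p + 2`, the determinant identity yields
`n(l) · κ(x :: l) = n(x :: l) · κ(l) + (n(x :: l) - n(l) - 1)²`,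
so `κ ≥ 0` by induction from `κ([]) = 0`. Any inverse `a' ≥ 0` of `a` modulo `n` is `≥ p`.
-/

/-- Value of a Hirzebruch–Jung continued fraction `[b₁,…,b_l]`,
i.e. `b₁ - 1/(b₂ - 1/(… ))`, using the junk value `0⁻¹ = 0` for the empty list. -/
def hjVal : List ℤ → ℚ
  | [] => 0
  | b :: l => (b : ℚ) - (hjVal l)⁻¹

/-- For `n/a = [b₁,…,b_l]` this is `!![n, -a'; a, -(a * a' - 1) / n]`. -/
def hjMatrix (b : List ℤ) : Matrix (Fin 2) (Fin 2) ℤ :=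
  (b.map fun x => !![x, -1; 1, 0]).prod

section HirzebruchJung

variable (x : ℤ) (l : List ℤ)

theorem hjMatrix_cons : hjMatrix (x :: l) = !![x, -1; 1, 0] * hjMatrix l := by
  simp [hjMatrix]

theorem hjMatrix_cons_zero_zero :
    hjMatrix (x :: l) 0 0 = x * hjMatrix l 0 0 - hjMatrix l 1 0 := by
  simp [hjMatrix_cons, Matrix.mul_apply, Fin.sum_univ_two]; ring

theorem hjMatrix_cons_zero_one :
    hjMatrix (x :: l) 0 1 = x * hjMatrix l 0 1 - hjMatrix l 1 1 := by
  simp [hjMatrix_cons, Matrix.mul_apply, Fin.sum_univ_two]; ring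

theorem hjMatrix_cons_one_zero : hjMatrix (x :: l) 1 0 = hjMatrix l 0 0 := by
  simp [hjMatrix_cons, Matrix.mul_apply, Fin.sum_univ_two]

theorem hjMatrix_cons_one_one : hjMatrix (x :: l) 1 1 = hjMatrix l 0 1 := by
  simp [hjMatrix_cons, Matrix.mul_apply, Fin.sum_univ_two]

end HirzebruchJung

theorem hjMatrix_det (b : List ℤ) : (hjMatrix b).det = 1 := by
  induction b with
  | nil => simp [hjMatrix]
  | cons x l ih => rw [hjMatrix_cons, Matrix.det_mul, ih]; simp

theorem hjMatrix_entry_bounds :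
    ∀ b : List ℤ, (∀ x ∈ b, 2 ≤ x) →
      0 ≤ hjMatrix b 1 0 ∧ hjMatrix b 1 0 < hjMatrix b 0 0 ∧ -hjMatrix b 0 1 < hjMatrix b 0 0
  | [], _ => by simp [hjMatrix]
  | x :: l, hb => by
    obtain ⟨ha, han, hpn⟩ := hjMatrix_entry_bounds l fun y hy => hb y (List.mem_cons_of_mem x hy)
    have hx : 2 ≤ x := hb x List.mem_cons_self
    have hdet := hjMatrix_det (x :: l)
    rw [Matrix.det_fin_two] at hdet
    simp only [hjMatrix_cons_zero_zero, hjMatrix_cons_one_zero, hjMatrix_cons_zero_one,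
      hjMatrix_cons_one_one] at hdet ⊢
    have hn : hjMatrix l 0 0 < x * hjMatrix l 0 0 - hjMatrix l 1 0 := by nlinarith
    refine ⟨by omega, hn, ?_⟩
    -- the determinant reads `p(x :: l) · n(l) = 1 + n(x :: l) · p(l)`
    have hpn' : (x * hjMatrix l 0 0 - hjMatrix l 1 0) * (-hjMatrix l 0 1) ≤
        (x * hjMatrix l 0 0 - hjMatrix l 1 0) * (hjMatrix l 0 0 - 1) :=
      mul_le_mul_of_nonneg_left (by omega) (by omega)
    nlinarith

theorem hjVal_eq_div :
    ∀ b : List ℤ, (∀ x ∈ b, 2 ≤ x) → hjVal b = (hjMatrix b 0 0 : ℚ) / hjMatrix b 1 0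
  | [], _ => by simp [hjVal, hjMatrix] -- `hjVal [] = 0 = 1 / 0`
  | x :: l, hb => by
    have hbl : ∀ y ∈ l, 2 ≤ y := fun y hy => hb y (List.mem_cons_of_mem x hy)
    obtain ⟨ha, han, -⟩ := hjMatrix_entry_bounds l hbl
    have hn : (hjMatrix l 0 0 : ℚ) ≠ 0 := by exact_mod_cast (by omega : hjMatrix l 0 0 ≠ 0)
    rw [hjVal, hjVal_eq_div l hbl, inv_div, hjMatrix_cons_zero_zero, hjMatrix_cons_one_zero]
    push_cast
    field_simp

/-- `n · k(1/n(1,a))`, with `a'` read off `hjMatrix b`. -/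
def hjKappa (b : List ℤ) : ℤ :=
  hjMatrix b 0 0 * ((b.map fun x => x - 2).sum - 2) + hjMatrix b 1 0 - hjMatrix b 0 1 + 2

theorem hjKappa_cons (x : ℤ) (l : List ℤ) :
    hjMatrix l 0 0 * hjKappa (x :: l) =
      hjMatrix (x :: l) 0 0 * hjKappa l + (hjMatrix (x :: l) 0 0 - hjMatrix l 0 0 - 1) ^ 2 := by
  have hdet := hjMatrix_det l
  rw [Matrix.det_fin_two] at hdet
  simp only [hjKappa, List.map_cons, List.sum_cons, hjMatrix_cons_zero_zero,
    hjMatrix_cons_one_zero, hjMatrix_cons_zero_one]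
  linear_combination hdet

theorem hjKappa_nonneg : ∀ b : List ℤ, (∀ x ∈ b, 2 ≤ x) → 0 ≤ hjKappa b
  | [], _ => by simp [hjKappa, hjMatrix]
  | x :: l, hb => by
    have hbl : ∀ y ∈ l, 2 ≤ y := fun y hy => hb y (List.mem_cons_of_mem x hy)
    obtain ⟨ha, han, -⟩ := hjMatrix_entry_bounds l hbl
    obtain ⟨-, hn, -⟩ := hjMatrix_entry_bounds (x :: l) hb
    rw [hjMatrix_cons_one_zero] at hn
    have hκ := hjKappa_nonneg l hbl
    nlinarith [hjKappa_cons x l]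

theorem hjMatrix_col_eq_of_hjVal_eq {b : List ℤ} (hb : ∀ x ∈ b, 2 ≤ x) {n a : ℤ} (hn : 0 < n)
    (ha : 0 < a) (hcop : IsCoprime n a) (h : hjVal b = (n : ℚ) / a) :
    hjMatrix b 0 0 = n ∧ hjMatrix b 1 0 = a := by
  obtain ⟨hA, -, -⟩ := hjMatrix_entry_bounds b hb
  rw [hjVal_eq_div b hb] at h
  have hA : 0 < hjMatrix b 1 0 := by
    refine lt_of_le_of_ne hA fun hA0 => ?_
    rw [← hA0, Int.cast_zero, div_zero, eq_comm] at h
    exact (div_pos (Int.cast_pos.mpr hn) (Int.cast_pos.mpr ha)).ne' h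
  have hcopM : IsCoprime (hjMatrix b 0 0) (hjMatrix b 1 0) :=
    ⟨hjMatrix b 1 1, -hjMatrix b 0 1, by rw [← hjMatrix_det b, Matrix.det_fin_two]; ring⟩
  exact Rat.div_int_inj hA ha (Int.isCoprime_iff_nat_coprime.mp hcopM)
    (Int.isCoprime_iff_nat_coprime.mp hcop) h

theorem neg_hjMatrix_zero_one_mul_modEq (b : List ℤ) :
    -hjMatrix b 0 1 * hjMatrix b 1 0 ≡ 1 [ZMOD hjMatrix b 0 0] :=
  Int.modEq_iff_dvd.mpr ⟨hjMatrix b 1 1, by rw [← hjMatrix_det b, Matrix.det_fin_two]; ring⟩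

theorem Int.ModEq.of_mul_modEq_one {n p a q : ℤ} (hp : p * a ≡ 1 [ZMOD n])
    (hq : a * q ≡ 1 [ZMOD n]) : p ≡ q [ZMOD n] :=
  calc p = p * 1 := (mul_one p).symm
    _ ≡ p * (a * q) [ZMOD n] := hq.symm.mul_left p
    _ = p * a * q := (mul_assoc p a q).symm
    _ ≡ 1 * q [ZMOD n] := hp.mul_right q
    _ = q := one_mul q

theorem Int.ModEq.le_of_lt_of_nonneg {n p q : ℤ} (h : p ≡ q [ZMOD n]) (hp : p < n) (hq : 0 ≤ q) :
    p ≤ q := by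
  obtain ⟨k, hk⟩ := h.dvd
  by_contra! hqp
  have hn : 0 < n := by omega
  have hk0 : k < 0 := by nlinarith
  nlinarith

theorem stmt2_general (n a a' : ℕ) (ha : 1 ≤ a) (han : a < n)
    (hcop : Nat.Coprime n a)
    (hinv : a * a' ≡ 1 [MOD n])
    (b : List ℤ) (hb : ∀ x ∈ b, 2 ≤ x)
    (hcf : hjVal b = (n : ℚ) / (a : ℚ)) :
    0 ≤ -2 + (2 + (a : ℚ) + (a' : ℚ)) / (n : ℚ)
        + (((b.map (fun x => x - 2)).sum : ℤ) : ℚ) := by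
  obtain ⟨hN, hA⟩ := hjMatrix_col_eq_of_hjVal_eq (n := n) (a := a) hb (by omega) (by omega)
    (Int.isCoprime_iff_nat_coprime.mpr hcop) (by rw [hcf, Int.cast_natCast, Int.cast_natCast])
  have hp : -hjMatrix b 0 1 ≤ a' := by
    have hpn := (hjMatrix_entry_bounds b hb).2.2
    have hpa := neg_hjMatrix_zero_one_mul_modEq b
    rw [hN] at hpn
    rw [hN, hA] at hpa
    have hinvZ : (a * a' : ℤ) ≡ 1 [ZMOD n] := by exact_mod_cast Int.natCast_modEq_iff.mpr hinv
    exact (hpa.of_mul_modEq_one hinvZ).le_of_lt_of_nonneg hpn a'.cast_nonneg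
  have hκ := hjKappa_nonneg b hb
  rw [hjKappa, hN, hA] at hκ
  have hn : (0 : ℚ) < n := by exact_mod_cast (by omega : 0 < n)
  refine (mul_nonneg_iff_of_pos_left hn).mp ?_
  rw [mul_add, mul_add, mul_div_cancel₀ _ hn.ne']
  have : (0 : ℤ) ≤ n * -2 + (2 + a + a') + n * (b.map fun x => x - 2).sum := by linarith
  exact_mod_cast this

theorem stmt2 (n a a' : ℕ) (ha : 1 ≤ a) (han : a < n)
    (hcop : Nat.Coprime n a)
    (ha'1 : 1 ≤ a') (ha'2 : a' ≤ n - 1) (hinv : a * a' ≡ 1 [MOD n])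
    (b : List ℤ) (hb : ∀ x ∈ b, 2 ≤ x)
    (hcf : hjVal b = (n : ℚ) / (a : ℚ)) :
    0 ≤ -2 + (2 + (a : ℚ) + (a' : ℚ)) / (n : ℚ)
        + (((b.map (fun x => x - 2)).sum : ℤ) : ℚ) :=
  stmt2_general n a a' ha han hcop hinv b hb hcf
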